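/- arXiv:1907.00668 — 7 statements merged into one kernel-verified Lean document; each statement's English description precedes it below -/
import Mathlib

section
/- Let α, β > 0 and let f be the probability density function of the power Lindley distribution PL(α, β). Then for every positive integer k, the k-th moment equals m_k = ∫_0^∞ x^k f(x) dx = k Γ(k/α) [α(β+1) + k] / (α² β^{k/α} (β+1)), where Γ is Euler's gamma function. -/
/-!
Since `(1 + x^α) x^(α-1) = x^(α-1) + x^(2α-1)`, the moment `∫ x^r f` splits into two integrals
`∫ x^(sα-1) e^{-β x^α} dx = Γ(s) / (α β^s)` (substitute `u = β x^α`) with `s = r/α + 1` and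
`s = r/α + 2`; the recursion `Γ(s+1) = s Γ(s)` then brings both to a multiple of `Γ(r/α)`.
-/

open MeasureTheory Real Set

theorem integral_rpow_mul_sub_one_mul_exp_neg_mul_rpow {p b s : ℝ} (hp : 0 < p) (hb : 0 < b)
    (hs : 0 < s) :
    ∫ x in Ioi (0 : ℝ), x ^ (s * p - 1) * exp (-b * x ^ p) = Gamma s / (p * b ^ s) := by
  have hq : -1 < s * p - 1 := by nlinarith
  rw [integral_rpow_mul_exp_neg_mul_rpow hp hq hb, sub_add_cancel, neg_div,
    mul_div_cancel_right₀ s hp.ne', rpow_neg hb.le]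
  field_simp

theorem rpow_mul_one_add_rpow_mul_rpow_sub_one {x : ℝ} (hx : 0 < x) {α : ℝ} (hα : α ≠ 0)
    (r : ℝ) :
    x ^ r * ((1 + x ^ α) * x ^ (α - 1)) =
      x ^ ((r / α + 1) * α - 1) + x ^ ((r / α + 1 + 1) * α - 1) := by
  have h₁ : (r / α + 1) * α - 1 = r + (α - 1) := by field_simp; ring
  have h₂ : (r / α + 1 + 1) * α - 1 = r + α + (α - 1) := by field_simp; ring
  rw [h₁, h₂, rpow_add hx, rpow_add hx, rpow_add hx]
  ring

theorem integral_rpow_mul_one_add_rpow_mul_rpow_sub_one_mul_exp {α β r : ℝ} (hα : 0 < α)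
    (hβ : 0 < β) (hr : -α < r) :
    ∫ x in Ioi (0 : ℝ), x ^ r * ((1 + x ^ α) * x ^ (α - 1)) * exp (-β * x ^ α) =
      Gamma (r / α + 1) / (α * β ^ (r / α + 1)) +
        Gamma (r / α + 1 + 1) / (α * β ^ (r / α + 1 + 1)) := by
  have hs : 0 < r / α + 1 := by
    have : -1 < r / α := by rwa [lt_div_iff₀ hα, neg_one_mul]
    linarith
  have hs' : 0 < r / α + 1 + 1 := by linarith
  rw [← integral_rpow_mul_sub_one_mul_exp_neg_mul_rpow hα hβ hs,
    ← integral_rpow_mul_sub_one_mul_exp_neg_mul_rpow hα hβ hs',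
    ← integral_add (integrableOn_rpow_mul_exp_neg_mul_rpow (by nlinarith) hα hβ)
      (integrableOn_rpow_mul_exp_neg_mul_rpow (by nlinarith) hα hβ)]
  refine setIntegral_congr_fun measurableSet_Ioi fun x hx ↦ ?_
  rw [rpow_mul_one_add_rpow_mul_rpow_sub_one hx hα.ne', add_mul]

theorem setIntegral_rpow_mul_powerLindley {α β r : ℝ} (hα : 0 < α) (hβ : 0 < β) (hr : 0 < r) :
    ∫ x in Ioi (0 : ℝ), x ^ r *
        ((α * β ^ 2 / (β + 1)) * (1 + x ^ α) * x ^ (α - 1) * exp (-β * x ^ α)) =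
      r * Gamma (r / α) * (α * (β + 1) + r) / (α ^ 2 * β ^ (r / α) * (β + 1)) := by
  set t := r / α with ht
  have ht0 : 0 < t := div_pos hr hα
  calc _ = α * β ^ 2 / (β + 1) *
        ∫ x in Ioi (0 : ℝ), x ^ r * ((1 + x ^ α) * x ^ (α - 1)) * exp (-β * x ^ α) := by
        rw [← integral_const_mul]
        congr with x
        ring
    _ = α * β ^ 2 / (β + 1) * (t * Gamma t / (α * (β ^ t * β)) +
          (t + 1) * (t * Gamma t) / (α * (β ^ t * β * β))) := by
        rw [integral_rpow_mul_one_add_rpow_mul_rpow_sub_one_mul_exp hα hβ (by linarith), ← ht,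
          Gamma_add_one (s := t + 1) (by positivity), Gamma_add_one ht0.ne',
          rpow_add hβ (t + 1) 1, rpow_add hβ t 1, rpow_one]
    _ = _ := by
        have hrt : r = t * α := by rw [ht]; field_simp
        rw [hrt]
        have hβt : 0 < β ^ t := rpow_pos_of_pos hβ t
        field_simp
        ring

/-- The `k`-th moment of the power Lindley distribution `PL(α, β)`:
`m_k = ∫_0^∞ x^k f(x) dx = k Γ(k/α) [α(β+1)+k] / (α² β^{k/α} (β+1))`. -/
theorem power_lindley_moments (α β : ℝ) (hα : 0 < α) (hβ : 0 < β)
    (f : ℝ → ℝ)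
    (hf : ∀ x : ℝ, f x = if 0 < x then
      (α * β ^ 2 / (β + 1)) * (1 + x ^ α) * x ^ (α - 1) * Real.exp (-β * x ^ α) else 0) :
    ∀ k : ℕ, 0 < k →
      ∫ x in Set.Ioi (0 : ℝ), x ^ k * f x =
        (k : ℝ) * Real.Gamma ((k : ℝ) / α) * (α * (β + 1) + (k : ℝ)) /
          (α ^ 2 * β ^ ((k : ℝ) / α) * (β + 1)) := by
  intro k hk
  rw [← setIntegral_rpow_mul_powerLindley hα hβ (Nat.cast_pos.mpr hk)]
  refine setIntegral_congr_fun measurableSet_Ioi fun x hx ↦ ?_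
  rw [hf x, if_pos (mem_Ioi.mp hx), rpow_natCast]
end

section
/- Let 0 < α < 1 and β > 0, and let f be the probability density function of the power Lindley distribution PL(α, β). Then for every real number t > 0, the integral ∫_0^∞ e^{t x} f(x) dx is infinite; that is, the moment generating function of PL(α, β) does not exist on any interval around 0. -/
open MeasureTheory Real

/-- For `0 < α < 1`, the moment generating function of the power Lindley distribution
`PL(α, β)` does not exist on any interval around `0`: for every `t > 0`,
`∫_0^∞ e^{t x} f(x) dx = ∞`. -/
theorem power_lindley_mgf_not_exists_of_lt_one (α β : ℝ) (hα0 : 0 < α) (hα1 : α < 1)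
    (hβ : 0 < β)
    (f : ℝ → ℝ)
    (hf : ∀ x : ℝ, f x = if 0 < x then
      (α * β ^ 2 / (β + 1)) * (1 + x ^ α) * x ^ (α - 1) * Real.exp (-β * x ^ α) else 0) :
    ∀ t : ℝ, 0 < t →
      ∫⁻ x in Set.Ioi (0 : ℝ), ENNReal.ofReal (Real.exp (t * x) * f x) = ⊤ := by
  intro t ht
  set C := α * β ^ 2 / (β + 1) with hC
  have hCpos : 0 < C := by positivity
  -- β * x^(α-1) → 0
  have h0 : Filter.Tendsto (fun x : ℝ => β * x ^ (α - 1)) Filter.atTop (nhds 0) := by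
    have h := (tendsto_rpow_neg_atTop (by linarith : (0:ℝ) < 1 - α)).const_mul β
    simp only [mul_zero] at h
    convert h using 2 with x
    ring_nf
  have hE2 : ∀ᶠ x : ℝ in Filter.atTop, β * x ^ (α - 1) ≤ t / 2 :=
    h0.eventually_le_const (by positivity)
  have hev : ∀ᶠ x : ℝ in Filter.atTop, 1 ≤ Real.exp (t * x) * f x := by
    filter_upwards [Filter.eventually_ge_atTop (1:ℝ), hE2,
      Filter.eventually_ge_atTop (16 / (C * t ^ 2))] with x hx1 hx2 hx3
    have hx0 : (0:ℝ) < x := lt_of_lt_of_le one_pos hx1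
    rw [hf x, if_pos hx0]
    have hA : (0:ℝ) < x ^ α := Real.rpow_pos_of_pos hx0 α
    have hP : (0:ℝ) < x ^ (α - 1) := Real.rpow_pos_of_pos hx0 (α - 1)
    have hPin : 1 / x ≤ x ^ (α - 1) := by
      have := Real.rpow_le_rpow_of_exponent_le hx1 (by linarith : -1 ≤ α - 1)
      rwa [Real.rpow_neg_one, inv_eq_one_div] at this
    -- β x^α ≤ (t/2) x
    have hmul : x ^ (α - 1) * x = x ^ α := by
      rw [← Real.rpow_add_one hx0.ne' (α - 1)]
      ring_nf
    have hβxα : β * x ^ α ≤ (t / 2) * x := by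
      calc β * x ^ α = (β * x ^ (α - 1)) * x := by rw [mul_assoc, hmul]
        _ ≤ (t / 2) * x := mul_le_mul_of_nonneg_right hx2 hx0.le
    have hexp1 : Real.exp ((t / 2) * x) ≤ Real.exp (t * x) * Real.exp (-β * x ^ α) := by
      rw [← Real.exp_add]
      apply Real.exp_le_exp.2
      linarith
    -- exp((t/2)x) ≥ (t x / 4)^2
    have hexp2 : (t * x / 4) ^ 2 ≤ Real.exp ((t / 2) * x) := by
      have h2 : (t / 2) * x = t * x / 4 + t * x / 4 := by ring
      rw [h2, Real.exp_add]
      nlinarith [Real.add_one_le_exp (t * x / 4), mul_pos ht hx0]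
    have hx3' : (1:ℝ) ≤ C * t ^ 2 * x / 16 := by
      rw [div_le_iff₀ (by positivity : (0:ℝ) < C * t ^ 2)] at hx3
      nlinarith
    calc (1:ℝ) ≤ C * t ^ 2 * x / 16 := hx3'
      _ = C * (1 / x) * ((t * x / 4) ^ 2) := by field_simp; ring
      _ ≤ C * (x ^ (α - 1)) * ((t * x / 4) ^ 2) := by gcongr
      _ ≤ C * (x ^ (α - 1)) * (Real.exp (t * x) * Real.exp (-β * x ^ α)) := by
          gcongr
          exact hexp2.trans hexp1
      _ ≤ C * ((1 + x ^ α) * x ^ (α - 1)) * (Real.exp (t * x) * Real.exp (-β * x ^ α)) := by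
          nlinarith [mul_pos (mul_pos hCpos (mul_pos hA hP))
            (mul_pos (Real.exp_pos (t * x)) (Real.exp_pos (-β * x ^ α)))]
      _ = Real.exp (t * x) * (C * (1 + x ^ α) * x ^ (α - 1) * Real.exp (-β * x ^ α)) := by
          ring
  obtain ⟨M, hM⟩ := Filter.eventually_atTop.mp hev
  set M' : ℝ := max M 1 with hM'
  have hsub : Set.Ioi M' ⊆ Set.Ioi (0:ℝ) := by
    intro x hx
    exact lt_of_lt_of_le (lt_of_lt_of_le one_pos (le_max_right M 1)) (le_of_lt hx)
  have htop : (⊤ : ENNReal) ≤ ∫⁻ x in Set.Ioi M', ENNReal.ofReal (Real.exp (t * x) * f x) := by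
    have hvol : volume (Set.Ioi M') = ⊤ := Real.volume_Ioi
    calc (⊤ : ENNReal) = volume (Set.Ioi M') := hvol.symm
      _ = ∫⁻ _ in Set.Ioi M', (1:ENNReal) := (setLIntegral_one _).symm
      _ ≤ ∫⁻ x in Set.Ioi M', ENNReal.ofReal (Real.exp (t * x) * f x) := by
          refine setLIntegral_mono' measurableSet_Ioi ?_
          intro x hx
          have hx' : M ≤ x := le_of_lt (lt_of_le_of_lt (le_max_left M 1) hx)
          exact ENNReal.one_le_ofReal.2 (hM x hx')
  exact top_le_iff.mp (htop.trans (lintegral_mono_set hsub))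
end

section
/- Let α ≥ 1/2 and β > 0, and let m_k = k Γ(k/α) [α(β+1) + k] / (α² β^{k/α} (β+1)) be the k-th moment of the power Lindley distribution PL(α, β). Then there exists a constant C > 0 such that m_{k+1}/m_k ≤ C k² for all positive integers k; in particular m_{k+1}/m_k = O(k²) as k → ∞. -/
open Real

/-- Convexity bound: for `0 < x` and `0 < δ ≤ 2`, `Γ(x+δ) ≤ (1 + x*(x+1)) * Γ(x)`. -/
lemma gamma_shift_le (x δ : ℝ) (hx : 0 < x) (hδ : 0 < δ) (hδ2 : δ ≤ 2) :
    Real.Gamma (x + δ) ≤ (1 + x * (x + 1)) * Real.Gamma x := by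
  have hG : 0 < Real.Gamma x := Real.Gamma_pos_of_pos hx
  set t : ℝ := δ / 2 with ht
  have ht0 : 0 ≤ t := by positivity
  have ht1 : t ≤ 1 := by rw [ht]; linarith
  have hmem1 : x ∈ Set.Ioi (0 : ℝ) := hx
  have hmem2 : x + 2 ∈ Set.Ioi (0 : ℝ) := by simp; linarith
  have hconv := Real.convexOn_Gamma.2 hmem1 hmem2 (by linarith : (0:ℝ) ≤ 1 - t) ht0
    (by ring)
  have hcomb : (1 - t) • x + t • (x + 2) = x + δ := by
    simp only [smul_eq_mul]; rw [ht]; ring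
  rw [hcomb] at hconv
  have hΓ2 : Real.Gamma (x + 2) = (x + 1) * x * Real.Gamma x := by
    have h1 : Real.Gamma (x + 1) = x * Real.Gamma x := Real.Gamma_add_one hx.ne'
    have h2 : Real.Gamma (x + 1 + 1) = (x + 1) * Real.Gamma (x + 1) :=
      Real.Gamma_add_one (by linarith)
    have : x + 2 = x + 1 + 1 := by ring
    rw [this, h2, h1]; ring
  simp only [smul_eq_mul] at hconv
  rw [hΓ2] at hconv
  nlinarith [mul_nonneg ht0 hG.le,
    mul_le_mul_of_nonneg_right ht1
      (mul_nonneg (mul_nonneg (by linarith : (0:ℝ) ≤ x + 1) hx.le) hG.le)]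

/-- For `α ≥ 1/2` and `β > 0`, the moments of the power Lindley distribution satisfy
`m_{k+1}/m_k ≤ C k²` for all positive integers `k`, for some constant `C > 0`. -/
theorem power_lindley_moment_ratio_bound (α β : ℝ) (hα : 1 / 2 ≤ α) (hβ : 0 < β)
    (m : ℕ → ℝ)
    (hm : ∀ k : ℕ, m k = (k : ℝ) * Real.Gamma ((k : ℝ) / α) * (α * (β + 1) + (k : ℝ)) /
      (α ^ 2 * β ^ ((k : ℝ) / α) * (β + 1))) :
    ∃ C : ℝ, 0 < C ∧ ∀ k : ℕ, 0 < k → m (k + 1) / m k ≤ C * (k : ℝ) ^ 2 := by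
  have hα0 : 0 < α := lt_of_lt_of_le (by norm_num) hα
  have hδ0 : 0 < 1 / α := by positivity
  have hδ2 : 1 / α ≤ 2 := by
    rw [div_le_iff₀ hα0]; linarith
  refine ⟨28 * (1 + β ^ (-2 : ℝ)), by positivity, ?_⟩
  intro k hk
  have hK1 : (1 : ℝ) ≤ (k : ℝ) := by exact_mod_cast hk
  have hK0 : (0 : ℝ) < (k : ℝ) := by linarith
  set K : ℝ := (k : ℝ) with hKdef
  set x : ℝ := K / α with hxdef
  have hx : 0 < x := by positivity
  have hG : 0 < Real.Gamma x := Real.Gamma_pos_of_pos hx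
  have hG' : 0 < Real.Gamma (x + 1 / α) := Real.Gamma_pos_of_pos (by positivity)
  have hB : 0 < β ^ x := Real.rpow_pos_of_pos hβ x
  have hβδ : 0 < β ^ (1 / α) := Real.rpow_pos_of_pos hβ _
  have hA : 0 < α * (β + 1) := by positivity
  -- key: 28 ≤ C * β^(1/α)
  have hCβ : (28 : ℝ) ≤ 28 * (1 + β ^ (-2 : ℝ)) * β ^ (1 / α) := by
    have key : (1 : ℝ) ≤ (1 + β ^ (-2 : ℝ)) * β ^ (1 / α) := by
      rcases le_or_gt 1 β with h1 | h1
      · have : (1 : ℝ) ≤ β ^ (1 / α) := Real.one_le_rpow h1 hδ0.le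
        nlinarith [Real.rpow_pos_of_pos hβ (-2 : ℝ)]
      · have heq : β ^ (-2 : ℝ) * β ^ (1 / α) = β ^ (1 / α - 2) := by
          rw [← Real.rpow_add hβ]; ring_nf
        have : (1 : ℝ) ≤ β ^ (1 / α - 2) :=
          Real.one_le_rpow_of_pos_of_le_one_of_nonpos hβ h1.le (by linarith)
        nlinarith
    nlinarith
  -- Gamma ratio bound
  have hxK : x ≤ 2 * K := by
    rw [hxdef, div_le_iff₀ hα0]; nlinarith
  have hGb : Real.Gamma (x + 1 / α) ≤ 7 * K ^ 2 * Real.Gamma x := by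
    calc Real.Gamma (x + 1 / α) ≤ (1 + x * (x + 1)) * Real.Gamma x :=
          gamma_shift_le x (1 / α) hx hδ0 hδ2
      _ ≤ 7 * K ^ 2 * Real.Gamma x := by
          have : 1 + x * (x + 1) ≤ 7 * K ^ 2 := by nlinarith
          exact mul_le_mul_of_nonneg_right this hG.le
  -- positivity of m k
  have hmk : 0 < m k := by
    rw [hm k]
    have : (0:ℝ) < α * (β + 1) + K := by positivity
    positivity
  rw [div_le_iff₀ hmk, hm k, hm (k + 1)]
  push_cast
  have hexp : (K + 1) / α = x + 1 / α := by rw [hxdef]; ring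
  rw [hexp, Real.rpow_add hβ x (1 / α)]
  rw [div_le_iff₀ (by positivity : (0:ℝ) < α ^ 2 * (β ^ x * β ^ (1 / α)) * (β + 1))]
  have key : (K + 1) * Real.Gamma (x + 1 / α) * (α * (β + 1) + (K + 1)) ≤
      28 * (1 + β ^ (-2 : ℝ)) * K ^ 2 *
        (K * Real.Gamma x * (α * (β + 1) + K)) * β ^ (1 / α) := by
    calc (K + 1) * Real.Gamma (x + 1 / α) * (α * (β + 1) + (K + 1))
        ≤ (2 * K) * (7 * K ^ 2 * Real.Gamma x) * (2 * (α * (β + 1) + K)) := by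
          apply mul_le_mul
          · apply mul_le_mul (by linarith) hGb hG'.le (by positivity)
          · linarith
          · positivity
          · positivity
      _ = 28 * (K ^ 3 * Real.Gamma x * (α * (β + 1) + K)) := by ring
      _ ≤ (28 * (1 + β ^ (-2 : ℝ)) * β ^ (1 / α)) *
            (K ^ 3 * Real.Gamma x * (α * (β + 1) + K)) := by
          apply mul_le_mul_of_nonneg_right hCβ
          positivity
      _ = 28 * (1 + β ^ (-2 : ℝ)) * K ^ 2 *
            (K * Real.Gamma x * (α * (β + 1) + K)) * β ^ (1 / α) := by ring
  calc (K + 1) * Real.Gamma (x + 1 / α) * (α * (β + 1) + (K + 1))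
      = ((K + 1) * Real.Gamma (x + 1 / α) * (α * (β + 1) + (K + 1))) * 1 := by ring
    _ ≤ (28 * (1 + β ^ (-2 : ℝ)) * K ^ 2 *
          (K * Real.Gamma x * (α * (β + 1) + K)) * β ^ (1 / α)) *
          ((α ^ 2 * β ^ x * (β + 1)) / (α ^ 2 * β ^ x * (β + 1))) := by
        rw [div_self (by positivity : (α ^ 2 * β ^ x * (β + 1)) ≠ 0)]
        simpa using key
    _ = 28 * (1 + β ^ (-2 : ℝ)) * K ^ 2 *
          (K * Real.Gamma x * (α * (β + 1) + K) / (α ^ 2 * β ^ x * (β + 1))) *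
          (α ^ 2 * (β ^ x * β ^ (1 / α)) * (β + 1)) := by
        field_simp
end

section
/- Let 0 < α < 1/2 and β > 0, write 1/α = 2 + 2ε with ε > 0, and let m_k = k Γ(k/α) [α(β+1) + k] / (α² β^{k/α} (β+1)) be the k-th moment of the power Lindley distribution PL(α, β). Then there exists a constant C > 0 such that m_k ≥ C k^{(2+ε)k} for all positive integers k. -/
open Real Filter

lemma aux_pow_le_factorial (p : ℕ) : (p : ℝ) ^ p ≤ p.factorial * Real.exp p := by
  induction p with
  | zero => simp
  | succ n ih =>
    have key : ((n : ℝ) + 1) ^ n ≤ (n : ℝ) ^ n * Real.exp 1 := by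
      rcases Nat.eq_zero_or_pos n with h | h
      · subst h; simpa using Real.one_le_exp zero_le_one
      · have hn : (0 : ℝ) < n := by exact_mod_cast h
        have h1 : (n : ℝ) + 1 ≤ (n : ℝ) * Real.exp (1 / n) := by
          have := Real.add_one_le_exp (1 / (n : ℝ))
          calc (n : ℝ) + 1 = (n : ℝ) * (1 / n + 1) := by field_simp; ring
            _ ≤ (n : ℝ) * Real.exp (1 / n) := by
                exact mul_le_mul_of_nonneg_left this hn.le
        calc ((n : ℝ) + 1) ^ n ≤ ((n : ℝ) * Real.exp (1 / n)) ^ n := by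
              exact pow_le_pow_left₀ (by positivity) h1 n
          _ = (n : ℝ) ^ n * Real.exp 1 := by
              rw [mul_pow, ← Real.exp_nat_mul]
              congr 2
              field_simp
    have hnn : (0 : ℝ) ≤ (n : ℝ) + 1 := by positivity
    calc ((n + 1 : ℕ) : ℝ) ^ (n + 1) = ((n : ℝ) + 1) * ((n : ℝ) + 1) ^ n := by
          push_cast; ring
      _ ≤ ((n : ℝ) + 1) * ((n : ℝ) ^ n * Real.exp 1) := by
          exact mul_le_mul_of_nonneg_left key hnn
      _ ≤ ((n : ℝ) + 1) * ((n.factorial * Real.exp n) * Real.exp 1) := by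
          refine mul_le_mul_of_nonneg_left ?_ hnn
          exact mul_le_mul_of_nonneg_right ih (Real.exp_pos 1).le
      _ = (n + 1).factorial * Real.exp ((n + 1 : ℕ) : ℝ) := by
          rw [Nat.factorial_succ]
          push_cast
          rw [Real.exp_add]
          ring

lemma aux_log_factorial (p : ℕ) : (p : ℝ) * Real.log p - p ≤ Real.log p.factorial := by
  have h := aux_pow_le_factorial p
  rcases Nat.eq_zero_or_pos p with hp | hp
  · subst hp; simp
  have h1 : Real.log ((p : ℝ) ^ p) ≤ Real.log (p.factorial * Real.exp p) :=
    Real.log_le_log (by positivity) h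
  rw [Real.log_pow, Real.log_mul (by positivity) (Real.exp_ne_zero _), Real.log_exp] at h1
  linarith

lemma aux_exists_C (f : ℕ → ℝ) (hpos : ∀ k : ℕ, 0 < k → 0 < f k)
    (hev : ∀ᶠ k in atTop, 1 ≤ f k) :
    ∃ C : ℝ, 0 < C ∧ ∀ k : ℕ, 0 < k → C ≤ f k := by
  obtain ⟨N, hN⟩ := eventually_atTop.mp hev
  set T : Finset ℝ := insert 1 ((Finset.Icc 1 N).image f) with hT
  have hTne : T.Nonempty := Finset.insert_nonempty _ _
  refine ⟨T.min' hTne, ?_, ?_⟩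
  · rcases Finset.mem_insert.mp (T.min'_mem hTne) with h | h
    · rw [h]; norm_num
    · obtain ⟨k, hk, hfk⟩ := Finset.mem_image.mp h
      rw [← hfk]
      exact hpos k (Finset.mem_Icc.mp hk).1
  · intro k hk
    rcases le_or_gt k N with h | h
    · exact Finset.min'_le _ _ (Finset.mem_insert.mpr (Or.inr
        (Finset.mem_image.mpr ⟨k, Finset.mem_Icc.mpr ⟨hk, h⟩, rfl⟩)))
    · exact le_trans (Finset.min'_le _ _ (Finset.mem_insert_self _ _)) (hN k h.le)

/-- For `0 < α < 1/2` and `β > 0`, writing `1/α = 2 + 2ε` with `ε > 0`, the moments of the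
power Lindley distribution satisfy `m_k ≥ C k^{(2+ε)k}` for all positive integers `k`,
for some constant `C > 0`. -/
theorem power_lindley_moment_growth (α β ε : ℝ) (hα0 : 0 < α) (hα : α < 1 / 2)
    (hβ : 0 < β) (hε : 0 < ε) (hαε : 1 / α = 2 + 2 * ε)
    (m : ℕ → ℝ)
    (hm : ∀ k : ℕ, m k = (k : ℝ) * Real.Gamma ((k : ℝ) / α) * (α * (β + 1) + (k : ℝ)) /
      (α ^ 2 * β ^ ((k : ℝ) / α) * (β + 1))) :
    ∃ C : ℝ, 0 < C ∧ ∀ k : ℕ, 0 < k → C * (k : ℝ) ^ ((2 + ε) * (k : ℝ)) ≤ m k := by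
  have hxk : ∀ k : ℕ, (k : ℝ) / α = (2 + 2 * ε) * (k : ℝ) := by
    intro k; rw [div_eq_mul_one_div, hαε]; ring
  set A : ℝ := α ^ 2 * (β + 1) with hA
  have hApos : 0 < A := by positivity
  have hmpos : ∀ k : ℕ, 0 < k → 0 < m k := by
    intro k hk
    rw [hm k]
    have hk' : (0 : ℝ) < k := by exact_mod_cast hk
    have hΓ : 0 < Real.Gamma ((k : ℝ) / α) := Real.Gamma_pos_of_pos (by positivity)
    have hrp : 0 < β ^ ((k : ℝ) / α) := Real.rpow_pos_of_pos hβ _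
    positivity
  set c : ℝ := Real.log 2 - 1 with hc
  set c2 : ℝ := (2 + (3 / 2) * ε) * c - (2 + 2 * ε) * Real.log β with hc2
  set LA : ℝ := Real.log A with hLA
  clear_value c c2 LA
  have hlogtend : Tendsto (fun k : ℕ => Real.log k) atTop atTop :=
    Real.tendsto_log_atTop.comp tendsto_natCast_atTop_atTop
  have h1 : ∀ᶠ k : ℕ in atTop, 3 ≤ k := eventually_ge_atTop 3
  have h2 : ∀ᶠ k : ℕ in atTop, (4 : ℝ) ≤ ε * k := by
    have : Tendsto (fun k : ℕ => ε * (k : ℝ)) atTop atTop :=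
      (tendsto_natCast_atTop_atTop).const_mul_atTop hε
    exact this.eventually_ge_atTop 4
  have h3 : ∀ᶠ k : ℕ in atTop, |LA| + |c2| ≤ (ε / 2) * Real.log k := by
    have : Tendsto (fun k : ℕ => (ε / 2) * Real.log k) atTop atTop :=
      hlogtend.const_mul_atTop (by positivity)
    exact this.eventually_ge_atTop _
  have h4 : ∀ᶠ k : ℕ in atTop, (1 : ℝ) ≤ Real.log k := hlogtend.eventually_ge_atTop 1
  have hev : ∀ᶠ k : ℕ in atTop, (1 : ℝ) ≤ m k / (k : ℝ) ^ ((2 + ε) * (k : ℝ)) := by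
    filter_upwards [h1, h2, h3, h4] with k hk3 hkε hk3' hklog
    have hk0 : 0 < k := by omega
    have hK0 : (0 : ℝ) < k := by exact_mod_cast hk0
    have hK3 : (3 : ℝ) ≤ k := by exact_mod_cast hk3
    have hK1 : (1 : ℝ) ≤ k := by linarith
    set K : ℝ := (k : ℝ) with hK
    set x : ℝ := (2 + 2 * ε) * K with hxdef
    have hx6 : 6 ≤ x := by rw [hxdef]; linarith [hkε, hK3]
    have hx0 : 0 < x := by linarith
    have hD : 0 < K ^ ((2 + ε) * K) := Real.rpow_pos_of_pos hK0 _
    rw [le_div_iff₀ hD, one_mul]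
    -- core inequality: A * β ^ x * K ^ ((2+ε)K) ≤ Γ x
    have hβx : 0 < β ^ x := Real.rpow_pos_of_pos hβ _
    have core : A * β ^ x * K ^ ((2 + ε) * K) ≤ Real.Gamma x := by
      set n : ℕ := ⌊x⌋₊ with hn
      have hn2 : 2 ≤ n := Nat.le_floor (by push_cast; linarith)
      have hnx : (n : ℝ) ≤ x := Nat.floor_le hx0.le
      have hxn : x < n + 1 := Nat.lt_floor_add_one x
      set p : ℕ := n - 1 with hp
      have hnp : n = p + 1 := by omega
      have hpc : (p : ℝ) = (n : ℝ) - 1 := by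
        rw [hnp]; push_cast; ring
      have hΓmono : Real.Gamma n ≤ Real.Gamma x := by
        refine Real.Gamma_strictMonoOn_Ici.monotoneOn ?_ ?_ hnx
        · simp only [Set.mem_Ici]; exact_mod_cast hn2
        · simp only [Set.mem_Ici]; linarith
      have hΓn : Real.Gamma n = (p.factorial : ℝ) := by
        rw [hnp]; push_cast; exact Real.Gamma_nat_eq_factorial p
      have hfact : A * β ^ x * K ^ ((2 + ε) * K) ≤ (p.factorial : ℝ) := by
        have hfpos : (0 : ℝ) < p.factorial := by exact_mod_cast p.factorial_pos
        rw [← Real.log_le_log_iff (by positivity) hfpos]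
        have hlogL : Real.log (A * β ^ x * K ^ ((2 + ε) * K)) =
            LA + x * Real.log β + (2 + ε) * K * Real.log K := by
          rw [hLA,
Real.log_mul (by positivity) (ne_of_gt hD),
            Real.log_mul (ne_of_gt hApos) (ne_of_gt hβx),
            Real.log_rpow hβ, Real.log_rpow hK0]
        rw [hlogL]
        have hPp : (2 + (3 / 2) * ε) * K ≤ (p : ℝ) := by
          have hxe : x = (2 + (3 / 2) * ε) * K + (ε / 2) * K := by rw [hxdef]; ring
          rw [hpc]; linarith [hkε, hxn, hxe]
        have hppos : (0 : ℝ) < p := by linarith [hPp, hkε, hK3]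
        have h2K : (0 : ℝ) < 2 * K := by linarith
        have hlogp : Real.log 2 + Real.log K ≤ Real.log p := by
          rw [← Real.log_mul (by norm_num) (ne_of_gt hK0)]
          exact Real.log_le_log h2K (by linarith [hPp, hkε])
        have hckK : 0 ≤ Real.log K + c := by
          have := Real.log_nonneg (by norm_num : (1:ℝ) ≤ 2)
          rw [hc]; linarith
        have hmid : (2 + (3 / 2) * ε) * K * (Real.log K + c) ≤
            (p : ℝ) * Real.log p - (p : ℝ) := by
          have : (p : ℝ) * Real.log p - (p : ℝ) = (p : ℝ) * (Real.log p - 1) := by ring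
          rw [this]
          refine mul_le_mul hPp ?_ hckK (le_of_lt hppos)
          rw [hc]; linarith
        refine le_trans ?_ (le_trans hmid (aux_log_factorial p))
        -- final linear-ish step
        have ht : 0 ≤ (ε / 2) * Real.log K + c2 := by
          have := neg_abs_le c2
          have := abs_nonneg LA
          linarith
        have hLAle : LA ≤ K * ((ε / 2) * Real.log K + c2) := by
          have h5 : |LA| ≤ (ε / 2) * Real.log K + c2 := by
            have := neg_abs_le c2
            linarith
          calc LA ≤ |LA| := le_abs_self LA
            _ ≤ (ε / 2) * Real.log K + c2 := h5
            _ ≤ K * ((ε / 2) * Real.log K + c2) := le_mul_of_one_le_left ht hK1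
        rw [hc2] at hLAle
        rw [hxdef]
        linarith [hLAle]
      calc A * β ^ x * K ^ ((2 + ε) * K) ≤ (p.factorial : ℝ) := hfact
        _ = Real.Gamma n := hΓn.symm
        _ ≤ Real.Gamma x := hΓmono
    -- assemble: m k ≥ Γ x / (A β^x) ≥ K^((2+ε)K)
    have hΓpos : 0 < Real.Gamma x := Real.Gamma_pos_of_pos hx0
    have hmk : m k = (K * (α * (β + 1) + K)) * (Real.Gamma x / (A * β ^ x)) := by
      rw [hm k, hxk k, ← hxdef, hA]
      field_simp
      ring
    have hab : (0:ℝ) < α * (β + 1) := by positivity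
    have hfac1 : (1 : ℝ) ≤ K * (α * (β + 1) + K) := by
      calc (1:ℝ) = 1 * 1 := by ring
        _ ≤ K * K := mul_le_mul hK1 hK1 zero_le_one (by linarith)
        _ ≤ K * (α * (β + 1) + K) := by
            refine mul_le_mul_of_nonneg_left (by linarith) hK0.le
    have hstep : K ^ ((2 + ε) * K) ≤ Real.Gamma x / (A * β ^ x) := by
      rw [le_div_iff₀ (by positivity)]
      calc K ^ ((2 + ε) * K) * (A * β ^ x) = A * β ^ x * K ^ ((2 + ε) * K) := by ring
        _ ≤ Real.Gamma x := core
    calc K ^ ((2 + ε) * K) ≤ Real.Gamma x / (A * β ^ x) := hstep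
      _ = 1 * (Real.Gamma x / (A * β ^ x)) := by ring
      _ ≤ (K * (α * (β + 1) + K)) * (Real.Gamma x / (A * β ^ x)) := by
          refine mul_le_mul_of_nonneg_right hfac1 (by positivity)
      _ = m k := hmk.symm
  obtain ⟨C, hC, hCle⟩ := aux_exists_C (fun k => m k / (k : ℝ) ^ ((2 + ε) * (k : ℝ)))
    (fun k hk => div_pos (hmpos k hk)
      (Real.rpow_pos_of_pos (by exact_mod_cast hk) _)) hev
  refine ⟨C, hC, fun k hk => ?_⟩
  have hD : (0 : ℝ) < (k : ℝ) ^ ((2 + ε) * (k : ℝ)) :=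
    Real.rpow_pos_of_pos (by exact_mod_cast hk) _
  exact (le_div_iff₀ hD).mp (hCle k hk)
end

section
/- Let p, q > 0 and let t be a real number with |t| < π/2. Then ∫_0^∞ x^{p−1} e^{−q x} sin(q x tan t) dx = (Γ(p)/q^p) cos^p(t) sin(p t), where Γ is Euler's gamma function. -/
/-!
The integrand is the imaginary part of `x^(p-1) e^(-z x)` with
`z = q (1 - i tan t) = (q / cos t) e^(-i t)`. The Laplace transform
`∫₀^∞ x^(a-1) e^(-z x) dx = (1/z)^a Γ(a)`, known for real `z > 0`, extends to
the half-plane `Re z > 0` by the identity theorem, since both sides are holomorphic in `z`; taking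
imaginary parts of `(1/z)^p Γ(p) = (cos t / q)^p e^(i p t) Γ(p)` gives the formula.
-/

open Real MeasureTheory Complex Set Filter Metric
open scoped Topology

lemma norm_ofReal_cpow_mul_cexp_neg_mul {x : ℝ} (hx : 0 < x) (a z : ℂ) :
    ‖(x : ℂ) ^ a * cexp (-(z * x))‖ = x ^ a.re * rexp (-(z.re * x)) := by
  rw [norm_mul, norm_cpow_eq_rpow_re_of_pos hx, norm_exp]
  simp

lemma aestronglyMeasurable_ofReal_cpow_mul_cexp_neg_mul (a z : ℂ) :
    AEStronglyMeasurable (fun x : ℝ => (x : ℂ) ^ a * cexp (-(z * x)))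
      (volume.restrict (Ioi 0)) := by
  refine (ContinuousOn.mul (fun x hx => ?_) (by fun_prop)).aestronglyMeasurable measurableSet_Ioi
  exact (continuous_ofReal.continuousAt.cpow continuousAt_const
    (ofReal_mem_slitPlane.2 hx)).continuousWithinAt

lemma integrableOn_ofReal_cpow_mul_cexp_neg_mul_Ioi {a z : ℂ} (ha : -1 < a.re) (hz : 0 < z.re) :
    IntegrableOn (fun x : ℝ => (x : ℂ) ^ a * cexp (-(z * x))) (Ioi 0) := by
  have hbound : IntegrableOn (fun x : ℝ => x ^ a.re * rexp (-(z.re * x))) (Ioi 0) := by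
    simpa using integrableOn_rpow_mul_exp_neg_mul_rpow ha one_pos hz
  refine hbound.mono' (aestronglyMeasurable_ofReal_cpow_mul_cexp_neg_mul a z) ?_
  filter_upwards [ae_restrict_mem measurableSet_Ioi] with x hx
  rw [norm_ofReal_cpow_mul_cexp_neg_mul hx]

lemma hasDerivAt_ofReal_cpow_mul_cexp_neg_mul {x : ℝ} (hx : 0 < x) (a z : ℂ) :
    HasDerivAt (fun v : ℂ => (x : ℂ) ^ a * cexp (-(v * x)))
      (-((x : ℂ) ^ (a + 1) * cexp (-(z * x)))) z := by
  refine (((hasDerivAt_mul_const (x : ℂ)).neg.cexp).const_mul ((x : ℂ) ^ a)).congr_deriv ?_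
  rw [cpow_add _ _ (ofReal_ne_zero.2 hx.ne'), cpow_one]
  simp only [Pi.neg_apply]
  ring

lemma differentiableOn_integral_ofReal_cpow_mul_cexp_neg_mul {a : ℂ} (ha : -1 < a.re) :
    DifferentiableOn ℂ (fun z : ℂ => ∫ x in Ioi (0 : ℝ), (x : ℂ) ^ a * cexp (-(z * x)))
      {z | 0 < z.re} := by
  intro w (hw : 0 < w.re)
  have hε : 0 < w.re / 2 := by positivity
  have hball : ∀ v ∈ ball w (w.re / 2), w.re / 2 ≤ v.re := by
    intro v hv
    have := (abs_re_le_norm (v - w)).trans_lt (mem_ball_iff_norm.1 hv)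
    rw [sub_re] at this
    linarith [neg_abs_le (v.re - w.re)]
  have hbound : ∀ᵐ x : ℝ ∂(volume.restrict (Ioi 0)), ∀ v ∈ ball w (w.re / 2),
      ‖-((x : ℂ) ^ (a + 1) * cexp (-(v * x)))‖ ≤
        x ^ (a.re + 1) * rexp (-(w.re / 2 * x)) := by
    filter_upwards [ae_restrict_mem measurableSet_Ioi] with x (hx : 0 < x) v hv
    rw [norm_neg, norm_ofReal_cpow_mul_cexp_neg_mul hx, add_re, one_re]
    gcongr
    nlinarith [hball v hv]
  have hbound_int : IntegrableOn (fun x : ℝ => x ^ (a.re + 1) * rexp (-(w.re / 2 * x)))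
      (Ioi 0) := by
    simpa using integrableOn_rpow_mul_exp_neg_mul_rpow (by linarith) one_pos hε
  have hderiv := hasDerivAt_integral_of_dominated_loc_of_deriv_le (ball_mem_nhds w hε)
    (.of_forall fun v => aestronglyMeasurable_ofReal_cpow_mul_cexp_neg_mul a v)
    (integrableOn_ofReal_cpow_mul_cexp_neg_mul_Ioi ha hw)
    (aestronglyMeasurable_ofReal_cpow_mul_cexp_neg_mul (a + 1) w).neg hbound hbound_int
    (by filter_upwards [ae_restrict_mem measurableSet_Ioi] with x hx v _
        exact hasDerivAt_ofReal_cpow_mul_cexp_neg_mul hx a v)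
  exact hderiv.2.differentiableAt.differentiableWithinAt

lemma eqOn_re_pos_of_forall_ofReal_eq {f g : ℂ → ℂ}
    (hf : DifferentiableOn ℂ f {z | 0 < z.re}) (hg : DifferentiableOn ℂ g {z | 0 < z.re})
    (hfg : ∀ r : ℝ, 0 < r → f r = g r) :
    EqOn f g {z | 0 < z.re} := by
  have hopen : IsOpen {z : ℂ | 0 < z.re} := isOpen_lt continuous_const continuous_re
  have hfreq : ∃ᶠ z in 𝓝[≠] (1 : ℂ), f z = g z := by
    have hmap : Tendsto ((↑) : ℝ → ℂ) (𝓝[≠] 1) (𝓝[≠] 1) :=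
      tendsto_nhdsWithin_of_tendsto_nhds_of_eventually_within _
        (continuous_ofReal.tendsto' 1 1 ofReal_one |>.mono_left nhdsWithin_le_nhds)
        (eventually_nhdsWithin_of_forall fun r hr => by simpa using hr)
    refine hmap.frequently (Eventually.frequently ?_)
    filter_upwards [eventually_nhdsWithin_of_eventually_nhds (eventually_gt_nhds one_pos)]
      with r hr using hfg r hr
  exact (hf.analyticOnNhd hopen).eqOn_of_preconnected_of_frequently_eq (hg.analyticOnNhd hopen)
    (convex_halfSpace_re_gt 0).isPreconnected (by simp) hfreq

lemma integral_ofReal_cpow_mul_cexp_neg_mul_Ioi {a z : ℂ} (ha : 0 < a.re) (hz : 0 < z.re) :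
    ∫ x in Ioi (0 : ℝ), (x : ℂ) ^ (a - 1) * cexp (-(z * x)) = (1 / z) ^ a * Gamma a := by
  refine eqOn_re_pos_of_forall_ofReal_eq (f := fun z : ℂ => ∫ x in Ioi (0 : ℝ),
      (x : ℂ) ^ (a - 1) * cexp (-(z * x))) (g := fun z => (1 / z) ^ a * Gamma a)
    (differentiableOn_integral_ofReal_cpow_mul_cexp_neg_mul (by simpa using ha)) ?_
    (fun r hr => integral_cpow_mul_exp_neg_mul_Ioi ha hr) hz
  intro w (hw : 0 < w.re)
  have hw0 : w ≠ 0 := fun h => by simp [h] at hw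
  have hinv : 0 < (1 / w).re := by
    rw [one_div, inv_re]; exact div_pos hw (normSq_pos.2 hw0)
  exact ((((differentiableAt_const 1).div differentiableAt_id hw0).cpow_const
    (Or.inl hinv)).mul_const _).differentiableWithinAt

lemma cexp_cpow {w : ℂ} (h₁ : -π < w.im) (h₂ : w.im ≤ π) (s : ℂ) :
    cexp w ^ s = cexp (w * s) := by
  rw [cpow_def_of_ne_zero (exp_ne_zero w), log_exp h₁ h₂]

lemma im_ofReal_cpow_mul_cexp_neg_mul {x : ℝ} (hx : 0 < x) (a : ℝ) (z : ℂ) :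
    ((x : ℂ) ^ (a : ℂ) * cexp (-(z * x))).im =
      x ^ a * rexp (-(z.re * x)) * Real.sin (-(z.im * x)) := by
  rw [← ofReal_cpow hx.le, im_ofReal_mul, exp_im]
  simp only [neg_re, neg_im, mul_re, mul_im, ofReal_re, ofReal_im, mul_zero, sub_zero, zero_add]
  ring

/-- For `p, q > 0` and `|t| < π/2`:
`∫_0^∞ x^{p-1} e^{-q x} sin(q x tan t) dx = (Γ(p)/q^p) cos^p(t) sin(p t)`. -/
theorem integral_rpow_exp_sin (p q t : ℝ) (hp : 0 < p) (hq : 0 < q)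
    (ht : |t| < π / 2) :
    ∫ x in Set.Ioi (0 : ℝ), x ^ (p - 1) * Real.exp (-q * x) * Real.sin (q * x * Real.tan t) =
      Real.Gamma p / q ^ p * Real.cos t ^ p * Real.sin (p * t) := by
  have hcos : 0 < Real.cos t := cos_pos_of_mem_Ioo (abs_lt.mp ht)
  have hlog : rexp (-Real.log (Real.cos t / q)) = q / Real.cos t := by
    rw [Real.exp_neg, Real.exp_log (div_pos hcos hq), inv_div]
  obtain ⟨w, hw_re, hw_im⟩ : ∃ w : ℂ, w.re = Real.log (Real.cos t / q) ∧ w.im = t :=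
    ⟨⟨_, _⟩, rfl, rfl⟩
  have hw_im_gt : -π < w.im := by linarith [abs_lt.mp ht, pi_pos]
  have hw_im_le : w.im ≤ π := by linarith [abs_lt.mp ht, pi_pos]
  have hre : (cexp (-w)).re = q := by
    rw [exp_re, neg_re, neg_im, hw_re, hw_im, hlog, Real.cos_neg]
    field_simp
  have him : (cexp (-w)).im = -(q * Real.tan t) := by
    rw [exp_im, neg_re, neg_im, hw_re, hw_im, hlog, Real.sin_neg, Real.tan_eq_sin_div_cos]
    field_simp
  calc _ = ∫ x in Ioi (0 : ℝ), ((x : ℂ) ^ ((p : ℂ) - 1) * cexp (-(cexp (-w) * x))).im := by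
        refine setIntegral_congr_fun measurableSet_Ioi fun x (hx : 0 < x) => ?_
        rw [← ofReal_one, ← ofReal_sub, im_ofReal_cpow_mul_cexp_neg_mul hx, hre, him]
        ring_nf
    _ = (∫ x in Ioi (0 : ℝ), (x : ℂ) ^ ((p : ℂ) - 1) * cexp (-(cexp (-w) * x))).im :=
        integral_im (integrableOn_ofReal_cpow_mul_cexp_neg_mul_Ioi (by simpa) (hre ▸ hq))
    _ = (cexp (w * p) * Complex.Gamma p).im := by
        rw [integral_ofReal_cpow_mul_cexp_neg_mul_Ioi (by simpa) (hre ▸ hq), one_div,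
          ← Complex.exp_neg, neg_neg, cexp_cpow hw_im_gt hw_im_le]
    _ = _ := by
        rw [Gamma_ofReal, im_mul_ofReal, exp_im, re_mul_ofReal, im_mul_ofReal, hw_re, hw_im,
          ← Real.rpow_def_of_pos (div_pos hcos hq), Real.div_rpow hcos.le hq.le]
        ring_nf
end

section
/- Let 0 < α < 1/2 and β > 0, and let f be the probability density function of the power Lindley distribution PL(α, β). Define h₁(x) = (x^{1−α}/(1+x^α)) e^{−β x^α} sin(2β x^α tan(πα)) for x > 0 and h₁(x) = 0 for x ≤ 0. Then ∫_0^∞ x^k f(x) h₁(x) dx = 0 for every nonnegative integer k. -/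
/-!
Substituting `t = x ^ α` turns the `k`-th moment into a multiple of
`∫₀^∞ t^(s-1) e^(-2βt) sin (2β tan (πα) t) dt` with `s = (k + 1) / α`. This is the imaginary part
of the Laplace transform `Γ(s) b^(-s)` of `t^(s-1)` at `b = 2β (1 - i tan (πα))`. Since
`arg b = -πα`, the number `b^(-s)` has argument `(k + 1) π` and is therefore real. The complex
Laplace transform formula follows from the real one by analytic continuation in `b` over the
right half-plane.
-/

open Real MeasureTheory Set Filter Topology ProbabilityTheory
open scoped Complex

theorem AnalyticOnNhd.eqOn_of_preconnected_of_eventuallyEq_ofReal {E : Type*}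
    [NormedAddCommGroup E] [NormedSpace ℂ E] {f g : ℂ → E} {U : Set ℂ}
    (hf : AnalyticOnNhd ℂ f U) (hg : AnalyticOnNhd ℂ g U) (hU : IsPreconnected U) {x₀ : ℝ}
    (hx₀ : (x₀ : ℂ) ∈ U) (hfg : ∀ᶠ x : ℝ in 𝓝 x₀, f x = g x) : EqOn f g U := by
  refine hf.eqOn_of_preconnected_of_frequently_eq hg hU hx₀ ?_
  have hreal : ∃ᶠ x : ℝ in 𝓝[≠] x₀, f x = g x := (hfg.filter_mono nhdsWithin_le_nhds).frequently
  exact (Complex.continuous_ofReal.continuousWithinAt.tendsto_nhdsWithin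
    fun _ _ ↦ by simp_all).frequently hreal

/-- `t ^ (s - 1) dt` on `(0, ∞)`: the Laplace transform of `t ^ (s - 1)` is the complex moment
generating function of `-t` under this measure, whose holomorphy is in the library. -/
noncomputable def rpowVolumeIoi (s : ℝ) : Measure ℝ :=
  (volume.restrict (Ioi 0)).withDensity fun t ↦ ENNReal.ofReal (t ^ (s - 1))

section rpowVolumeIoi

variable {E : Type*} [NormedAddCommGroup E] [NormedSpace ℝ E] {s : ℝ}

lemma integral_rpowVolumeIoi (g : ℝ → E) :
    ∫ t, g t ∂rpowVolumeIoi s = ∫ t in Ioi 0, t ^ (s - 1) • g t := by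
  rw [rpowVolumeIoi, integral_withDensity_eq_integral_toReal_smul (by fun_prop)
    (ae_of_all _ fun _ ↦ ENNReal.ofReal_lt_top)]
  refine setIntegral_congr_fun measurableSet_Ioi fun t ht ↦ ?_
  rw [ENNReal.toReal_ofReal (rpow_nonneg (le_of_lt ht) _)]

lemma integrable_rpowVolumeIoi_iff {g : ℝ → E} :
    Integrable g (rpowVolumeIoi s) ↔ IntegrableOn (fun t ↦ t ^ (s - 1) • g t) (Ioi 0) := by
  rw [rpowVolumeIoi, integrable_withDensity_iff_integrable_smul' (by fun_prop)
    (ae_of_all _ fun _ ↦ ENNReal.ofReal_lt_top)]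
  refine integrable_congr ?_
  filter_upwards [ae_restrict_mem measurableSet_Ioi] with t ht
  rw [ENNReal.toReal_ofReal (rpow_nonneg (le_of_lt ht) _)]

lemma Ioi_subset_integrableExpSet_rpowVolumeIoi (hs : 0 < s) :
    Ioi 0 ⊆ integrableExpSet Neg.neg (rpowVolumeIoi s) := by
  intro u hu
  rw [integrableExpSet, mem_ofPred_eq, integrable_rpowVolumeIoi_iff]
  refine (integrableOn_rpow_mul_exp_neg_mul_rpow (s := s - 1) (by linarith) zero_lt_one
    hu).congr_fun (fun t _ ↦ ?_) measurableSet_Ioi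
  simp [smul_eq_mul]

end rpowVolumeIoi

section LaplaceTransform

variable {s : ℝ}

lemma integrableOn_rpow_smul_cexp_neg_mul (hs : 0 < s) {b : ℂ} (hb : 0 < b.re) :
    IntegrableOn (fun t : ℝ ↦ t ^ (s - 1) • cexp (-(b * t))) (Ioi 0) := by
  rw [← integrable_rpowVolumeIoi_iff]
  simpa using integrable_cexp_mul_of_re_mem_integrableExpSet (X := Neg.neg)
    (μ := rpowVolumeIoi s) (z := b) (by fun_prop) (Ioi_subset_integrableExpSet_rpowVolumeIoi hs hb)

lemma analyticOnNhd_setIntegral_rpow_smul_cexp_neg_mul (hs : 0 < s) :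
    AnalyticOnNhd ℂ (fun z : ℂ ↦ ∫ t in Ioi (0 : ℝ), t ^ (s - 1) • cexp (-(z * t)))
      {z : ℂ | 0 < z.re} := by
  have h := (analyticOnNhd_complexMGF (X := Neg.neg) (μ := rpowVolumeIoi s)).mono
    fun z (hz : 0 < z.re) ↦ interior_maximal (Ioi_subset_integrableExpSet_rpowVolumeIoi hs)
      isOpen_Ioi hz
  refine h.congr (isOpen_lt continuous_const Complex.continuous_re) fun z _ ↦ ?_
  simp only [complexMGF, integral_rpowVolumeIoi, Complex.ofReal_neg, mul_neg]

theorem integral_rpow_smul_cexp_neg_mul_Ioi (hs : 0 < s) {b : ℂ} (hb : 0 < b.re) :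
    ∫ t in Ioi (0 : ℝ), t ^ (s - 1) • cexp (-(b * t)) = Complex.Gamma s * b ^ (-(s : ℂ)) := by
  have hG : AnalyticOnNhd ℂ (fun z : ℂ ↦ Complex.Gamma s * z ^ (-(s : ℂ))) {z : ℂ | 0 < z.re} :=
    fun z hz ↦ analyticAt_const.mul (analyticAt_id.cpow analyticAt_const (Or.inl hz))
  refine (analyticOnNhd_setIntegral_rpow_smul_cexp_neg_mul hs
    ).eqOn_of_preconnected_of_eventuallyEq_ofReal hG (convex_halfSpace_re_gt 0).isPreconnected
    (x₀ := 1) (by simp) ?_ hb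
  filter_upwards [lt_mem_nhds one_pos] with r hr
  have hreal := Real.integral_rpow_mul_exp_neg_mul_Ioi hs hr
  rw [one_div, inv_rpow hr.le, ← rpow_neg hr.le] at hreal
  simp only [Complex.real_smul]
  rw [← Complex.ofReal_neg, ← Complex.ofReal_cpow hr.le, Complex.Gamma_ofReal]
  norm_cast
  rw [hreal, mul_comm]

theorem integral_rpow_mul_exp_neg_mul_mul_sin_Ioi {a : ℝ} (hs : 0 < s) (ha : 0 < a) (c : ℝ) :
    ∫ t in Ioi (0 : ℝ), t ^ (s - 1) * (exp (-(a * t)) * sin (c * t)) =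
      (Complex.Gamma s * (a - c * Complex.I) ^ (-(s : ℂ))).im := by
  have hb : 0 < (a - c * Complex.I).re := by simpa using ha
  rw [← integral_rpow_smul_cexp_neg_mul_Ioi hs hb, ← RCLike.im_to_complex,
    ← integral_im (integrableOn_rpow_smul_cexp_neg_mul hs hb)]
  refine setIntegral_congr_fun measurableSet_Ioi fun t _ ↦ ?_
  have : -((a - c * Complex.I) * t) = ((-(a * t) : ℝ) : ℂ) + ((c * t : ℝ) : ℂ) * Complex.I := by
    push_cast; ring
  simp only [RCLike.im_to_complex, Complex.smul_im, this, Complex.exp_im, smul_eq_mul]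
  simp

end LaplaceTransform

lemma Complex.arg_sub_mul_tan_mul_I {a θ : ℝ} (ha : 0 < a) (hθ : |θ| < π / 2) :
    Complex.arg (a - a * Real.tan θ * Complex.I) = -θ := by
  have hcos : 0 < Real.cos θ := cos_pos_of_mem_Ioo (abs_lt.mp hθ)
  have : (a - a * Real.tan θ * Complex.I : ℂ) =
      ((a / Real.cos θ : ℝ) : ℂ) * (Real.cos (-θ) + Real.sin (-θ) * Complex.I) := by
    rw [Real.tan_eq_sin_div_cos, Real.cos_neg, Real.sin_neg]
    apply Complex.ext <;>
      simp only [Complex.sub_re, Complex.sub_im, Complex.add_re, Complex.add_im, Complex.mul_re,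
        Complex.mul_im, Complex.ofReal_re, Complex.ofReal_im, Complex.I_re, Complex.I_im] <;>
      field_simp <;> ring
  rw [this, Complex.arg_real_mul _ (by positivity), Complex.ofReal_cos, Complex.ofReal_sin,
    Complex.arg_cos_add_sin_mul_I]
  constructor <;> linarith [abs_lt.mp hθ, pi_pos]

theorem integral_rpow_mul_exp_neg_mul_mul_sin_tan_Ioi_eq_zero {s a θ : ℝ} (hs : 0 < s)
    (ha : 0 < a) (hθ : |θ| < π / 2) (hsθ : sin (θ * s) = 0) :
    ∫ t in Ioi (0 : ℝ), t ^ (s - 1) * (exp (-(a * t)) * sin (a * tan θ * t)) = 0 := by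
  rw [integral_rpow_mul_exp_neg_mul_mul_sin_Ioi hs ha, Complex.Gamma_ofReal, ← Complex.ofReal_neg,
    Complex.im_ofReal_mul, Complex.cpow_ofReal_im, Complex.ofReal_mul,
    Complex.arg_sub_mul_tan_mul_I ha hθ, neg_mul_neg, hsθ, mul_zero, mul_zero]

theorem integral_rpow_smul_comp_rpow_Ioi {E : Type*} [NormedAddCommGroup E] [NormedSpace ℝ E]
    (g : ℝ → E) {p α : ℝ} (hα : 0 < α) :
    ∫ x in Ioi (0 : ℝ), x ^ p • g (x ^ α) =
      α⁻¹ • ∫ t in Ioi (0 : ℝ), t ^ ((p + 1) / α - 1) • g t := by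
  rw [← integral_comp_rpow_Ioi_of_pos (g := fun t ↦ t ^ ((p + 1) / α - 1) • g t) hα,
    ← integral_smul]
  refine setIntegral_congr_fun measurableSet_Ioi fun x (hx : 0 < x) ↦ ?_
  have hpow : x ^ (α - 1) * (x ^ α) ^ ((p + 1) / α - 1) = x ^ p := by
    rw [← rpow_mul hx.le, ← rpow_add hx]
    congr 1
    field_simp
    ring
  rw [smul_smul, smul_smul, ← mul_assoc, inv_mul_cancel₀ hα.ne', one_mul, hpow]

/-- For `0 < α < 1/2` and `β > 0`, the function
`h₁(x) = (x^{1-α}/(1+x^α)) e^{-β x^α} sin(2β x^α tan(πα))` (for `x > 0`, zero otherwise)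
has vanishing moments against the power Lindley density `f`:
`∫_0^∞ x^k f(x) h₁(x) dx = 0` for every nonnegative integer `k`. -/
theorem power_lindley_perturbation_one (α β : ℝ) (hα0 : 0 < α) (hα : α < 1 / 2)
    (hβ : 0 < β)
    (f h₁ : ℝ → ℝ)
    (hf : ∀ x : ℝ, f x = if 0 < x then
      (α * β ^ 2 / (β + 1)) * (1 + x ^ α) * x ^ (α - 1) * Real.exp (-β * x ^ α) else 0)
    (hh : ∀ x : ℝ, h₁ x = if 0 < x then
      x ^ (1 - α) / (1 + x ^ α) * Real.exp (-β * x ^ α) *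
        Real.sin (2 * β * x ^ α * Real.tan (π * α)) else 0) :
    ∀ k : ℕ, ∫ x in Set.Ioi (0 : ℝ), x ^ k * f x * h₁ x = 0 := by
  intro k
  have hpoint : ∀ x ∈ Ioi (0 : ℝ), x ^ k * f x * h₁ x = α * β ^ 2 / (β + 1) *
      (x ^ (k : ℝ) • (exp (-(2 * β * x ^ α)) * sin (2 * β * tan (π * α) * x ^ α))) := by
    intro x (hx : 0 < x)
    have hcancel : x ^ (α - 1) * x ^ (1 - α) = 1 := by
      rw [← rpow_add hx, sub_add_sub_cancel', sub_self, rpow_zero]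
    have hexp : exp (-β * x ^ α) * exp (-β * x ^ α) = exp (-(2 * β * x ^ α)) := by
      rw [← exp_add]; ring_nf
    calc x ^ k * f x * h₁ x
        = α * β ^ 2 / (β + 1) * (x ^ k * (exp (-β * x ^ α) * exp (-β * x ^ α)) *
            sin (2 * β * x ^ α * tan (π * α))) * (x ^ (α - 1) * x ^ (1 - α)) *
            ((1 + x ^ α) / (1 + x ^ α)) := by
          rw [hf, hh, if_pos hx, if_pos hx]; ring
      _ = _ := by
          rw [hcancel, div_self (by positivity), hexp, rpow_natCast, smul_eq_mul]; ring_nf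
  have hθ : |π * α| < π / 2 := by
    rw [abs_of_pos (by positivity)]; nlinarith [pi_pos]
  have hsθ : sin (π * α * (((k : ℝ) + 1) / α)) = 0 := by
    rw [mul_assoc, mul_div_cancel₀ _ hα0.ne', ← Nat.cast_succ, mul_comm, sin_nat_mul_pi]
  rw [setIntegral_congr_fun measurableSet_Ioi hpoint, integral_const_mul,
    integral_rpow_smul_comp_rpow_Ioi (fun t ↦ exp (-(2 * β * t)) * sin (2 * β * tan (π * α) * t))
      hα0]
  simp only [smul_eq_mul]
  rw [integral_rpow_mul_exp_neg_mul_mul_sin_tan_Ioi_eq_zero (by positivity) (by positivity) hθ hsθ,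
    mul_zero, mul_zero]
end

section
/- Let 0 < α < 1/2, β > 0, b > 0, and γ ∈ (α, 1/2), and let f be the probability density function of the power Lindley distribution PL(α, β). Define h₂(x) = (x^{1−α}/(1+x^α)) e^{β x^α − b x^γ} sin(b x^γ tan(πγ)) for x > 0 and h₂(x) = 0 for x ≤ 0. Then ∫_0^∞ x^k f(x) h₂(x) dx = 0 for every nonnegative integer k. -/
/-!
In `x ^ k f(x) h₂(x)` the factors `1 + x ^ α`, `x ^ (α - 1) x ^ (1 - α)` and `e ^ (∓β x ^ α)`
cancel, and the substitution `y = x ^ γ` turns the moment into a multiple of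
`∫ y ^ (s - 1) e ^ (-b y) sin (b tan (πγ) y) dy` with `s = (k + 1) / γ`. This is the imaginary part
of the Laplace transform `Γ(s) (b - i b tan (πγ)) ^ (-s)`; as `1 / (b - i b tan (πγ))` has argument
`πγ ∈ (0, π/2)`, its `s`-th power has argument `(k + 1) π`, so it is real.
-/

open Real MeasureTheory
open Complex Set Filter Topology

lemma continuousOn_cpow_mul_cexp_neg_mul (a z : ℂ) :
    ContinuousOn (fun t : ℝ ↦ (t : ℂ) ^ (a - 1) * cexp (-z * t)) (Ioi 0) := fun t ht ↦
  ((continuousAt_ofReal_cpow_const t _ (Or.inr (ne_of_gt ht))).mul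
    (by fun_prop)).continuousWithinAt

lemma norm_cpow_mul_cexp_neg_mul {t : ℝ} (ht : 0 < t) (a z : ℂ) :
    ‖(t : ℂ) ^ (a - 1) * cexp (-z * t)‖ = t ^ (a.re - 1) * rexp (-(z.re * t)) := by
  rw [norm_mul, Complex.norm_exp, norm_cpow_eq_rpow_re_of_pos ht]
  simp [Complex.mul_re]

lemma integrableOn_cpow_mul_cexp_neg_mul {a : ℂ} (ha : 0 < a.re) {z : ℂ} (hz : 0 < z.re) :
    IntegrableOn (fun t : ℝ ↦ (t : ℂ) ^ (a - 1) * cexp (-z * t)) (Ioi 0) := by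
  refine Integrable.mono'
    (integrableOn_rpow_mul_exp_neg_mul_rpow (s := a.re - 1) (by linarith) one_pos hz)
    ((continuousOn_cpow_mul_cexp_neg_mul a z).aestronglyMeasurable measurableSet_Ioi) ?_
  filter_upwards [ae_restrict_mem measurableSet_Ioi] with t (ht : 0 < t)
  rw [norm_cpow_mul_cexp_neg_mul ht]
  simp

lemma differentiableOn_integral_cpow_mul_cexp_neg_mul {a : ℂ} (ha : 0 < a.re) :
    DifferentiableOn ℂ (fun z : ℂ ↦ ∫ t in Ioi (0 : ℝ), (t : ℂ) ^ (a - 1) * cexp (-z * t))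
      {z | 0 < z.re} := by
  intro z₀ (hz₀ : 0 < z₀.re)
  have hε : 0 < z₀.re / 2 := by linarith
  refine (hasDerivAt_integral_of_dominated_loc_of_deriv_le
    (F' := fun z t ↦ -(t * ((t : ℂ) ^ (a - 1) * cexp (-z * t))))
    (Metric.ball_mem_nhds z₀ hε)
    (.of_forall fun z ↦ (continuousOn_cpow_mul_cexp_neg_mul a z).aestronglyMeasurable
      measurableSet_Ioi) (integrableOn_cpow_mul_cexp_neg_mul ha hz₀)
    ((continuous_ofReal.continuousOn.mul (continuousOn_cpow_mul_cexp_neg_mul a z₀)).neg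
      |>.aestronglyMeasurable measurableSet_Ioi) ?_
    (integrableOn_rpow_mul_exp_neg_mul_rpow (s := a.re) (by linarith) one_pos hε) ?_).2
    |>.differentiableAt.differentiableWithinAt
  · filter_upwards [ae_restrict_mem measurableSet_Ioi] with t (ht : 0 < t) z hz
    have hre : z₀.re / 2 ≤ z.re := by
      have := (abs_re_le_norm (z - z₀)).trans_lt (mem_ball_iff_norm.mp hz)
      rw [sub_re] at this
      linarith [neg_abs_le (z.re - z₀.re)]
    rw [norm_neg, norm_mul, norm_cpow_mul_cexp_neg_mul ht, norm_real, norm_of_nonneg ht.le,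
      rpow_one, ← mul_assoc, rpow_sub_one ht.ne', mul_div_cancel₀ _ ht.ne']
    gcongr
    nlinarith
  · filter_upwards with t z _
    exact (((hasDerivAt_id z).neg.mul_const (t : ℂ)).cexp.const_mul _).congr_deriv (by simp; ring)

lemma differentiableOn_one_div_cpow_const (a : ℂ) :
    DifferentiableOn ℂ (fun z : ℂ ↦ (1 / z) ^ a) {z | 0 < z.re} := by
  intro w (hw : 0 < w.re)
  have hw0 : w ≠ 0 := by rintro rfl; simp at hw
  have hslit : 1 / w ∈ slitPlane :=
    Or.inl (by rw [one_div, inv_re]; exact div_pos hw (normSq_pos.2 hw0))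
  exact (((differentiableAt_const 1).div differentiableAt_id hw0).cpow_const
    hslit).differentiableWithinAt

/-- Both sides are holomorphic on the right half-plane and agree on the positive reals by
`Complex.integral_cpow_mul_exp_neg_mul_Ioi`. -/
lemma integral_cpow_mul_cexp_neg_mul_Ioi {a : ℂ} (ha : 0 < a.re) {z : ℂ} (hz : 0 < z.re) :
    ∫ t in Ioi (0 : ℝ), (t : ℂ) ^ (a - 1) * cexp (-z * t) = (1 / z) ^ a * Complex.Gamma a := by
  have hU : IsOpen {z : ℂ | 0 < z.re} := isOpen_lt continuous_const continuous_re
  have h_real : ∀ᶠ x : ℝ in 𝓝[≠] 1,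
      ∫ t in Ioi (0 : ℝ), (t : ℂ) ^ (a - 1) * cexp (-x * t) =
        (1 / (x : ℂ)) ^ a * Complex.Gamma a := by
    refine eventually_nhdsWithin_of_eventually_nhds ((lt_mem_nhds one_pos).mono fun x hx ↦ ?_)
    simpa only [neg_mul] using Complex.integral_cpow_mul_exp_neg_mul_Ioi ha hx
  have h_ofReal : Tendsto ((↑) : ℝ → ℂ) (𝓝[≠] 1) (𝓝[≠] 1) := by
    simpa using continuous_ofReal.continuousWithinAt.tendsto_nhdsWithin (x := (1 : ℝ))
      (s := {1}ᶜ) (t := {(1 : ℂ)}ᶜ) fun x (hx : x ≠ 1) (h : (x : ℂ) = 1) ↦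
        hx (by exact_mod_cast h)
  exact ((differentiableOn_integral_cpow_mul_cexp_neg_mul ha).analyticOnNhd hU)
    |>.eqOn_of_preconnected_of_frequently_eq
      (((differentiableOn_one_div_cpow_const a).mul_const _).analyticOnNhd hU)
    (convex_halfSpace_re_gt 0).isPreconnected (z₀ := 1) (by simp)
    (h_ofReal.frequently h_real.frequently) hz

lemma integral_rpow_mul_exp_neg_mul_mul_sin {s b : ℝ} (hs : 0 < s) (hb : 0 < b) (c : ℝ) :
    ∫ y in Ioi (0 : ℝ), y ^ (s - 1) * (rexp (-(b * y)) * Real.sin (c * y)) =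
      ((1 / (b - c * I)) ^ (s : ℂ) * Complex.Gamma s).im := by
  have hz : 0 < (b - c * I : ℂ).re := by simpa using hb
  rw [← integral_cpow_mul_cexp_neg_mul_Ioi (by simpa using hs) hz, ← RCLike.im_eq_complex_im,
    ← integral_im (integrableOn_cpow_mul_cexp_neg_mul (by simpa using hs) hz)]
  refine setIntegral_congr_fun measurableSet_Ioi fun y (hy : 0 < y) ↦ ?_
  rw [← ofReal_one, ← ofReal_sub, ← ofReal_cpow hy.le, RCLike.im_eq_complex_im, im_ofReal_mul,
    ← neg_mul, Complex.exp_im]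
  simp [Complex.mul_re, Complex.mul_im]

lemma arg_one_div_sub_mul_tan_mul_I {b θ : ℝ} (hb : 0 < b) (hθ : θ ∈ Ioo (-(π / 2)) (π / 2)) :
    arg (1 / (b - b * Real.tan θ * I)) = θ := by
  have hcos : 0 < Real.cos θ := cos_pos_of_mem_Ioo hθ
  have h : (b - b * Real.tan θ * I) * (((Real.cos θ / b : ℝ) : ℂ) *
      (Complex.cos θ + Complex.sin θ * I)) = 1 := by
    have hb' : (b : ℂ) ≠ 0 := by exact_mod_cast hb.ne'
    have hc' : Complex.cos θ ≠ 0 := by exact_mod_cast hcos.ne'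
    rw [Real.tan_eq_sin_div_cos]
    push_cast
    field_simp
    linear_combination (Complex.sin_sq_add_cos_sq (θ : ℂ)) - Complex.sin θ ^ 2 * I_sq
  rw [← eq_one_div_of_mul_eq_one_right h, arg_mul_cos_add_sin_mul_I (div_pos hcos hb)
    ⟨by linarith [hθ.1, pi_pos], by linarith [hθ.2, pi_pos]⟩]

lemma integral_rpow_mul_exp_neg_mul_mul_sin_tan_eq_zero {s b θ : ℝ} (hs : 0 < s) (hb : 0 < b)
    (hθ : θ ∈ Ioo (-(π / 2)) (π / 2)) (hθs : Real.sin (θ * s) = 0) :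
    ∫ y in Ioi (0 : ℝ), y ^ (s - 1) * (rexp (-(b * y)) * Real.sin (b * Real.tan θ * y)) = 0 := by
  rw [integral_rpow_mul_exp_neg_mul_mul_sin hs hb, Complex.Gamma_ofReal, im_mul_ofReal,
    cpow_ofReal_im, ofReal_mul, arg_one_div_sub_mul_tan_mul_I hb hθ, hθs, mul_zero, zero_mul]

lemma integral_rpow_mul_comp_rpow_Ioi {γ : ℝ} (hγ : 0 < γ) (m : ℝ) (g : ℝ → ℝ) :
    ∫ x in Ioi (0 : ℝ), x ^ m * g (x ^ γ) =
      γ⁻¹ * ∫ y in Ioi (0 : ℝ), y ^ ((m + 1) / γ - 1) * g y := by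
  rw [← integral_comp_rpow_Ioi (fun y ↦ y ^ ((m + 1) / γ - 1) * g y) hγ.ne',
    ← integral_const_mul]
  refine setIntegral_congr_fun measurableSet_Ioi fun x (hx : 0 < x) ↦ ?_
  have hpow : x ^ (γ - 1) * (x ^ γ) ^ ((m + 1) / γ - 1) = x ^ m := by
    rw [← rpow_mul hx.le, ← rpow_add hx, mul_sub, mul_div_cancel₀ _ hγ.ne']
    ring_nf
  rw [smul_eq_mul, abs_of_pos hγ, ← hpow]
  field_simp

lemma integral_pow_mul_exp_neg_mul_rpow_mul_sin_eq_zero {b γ : ℝ} (hb : 0 < b) (hγ0 : 0 < γ)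
    (hγ : γ < 1 / 2) (k : ℕ) :
    ∫ x in Ioi (0 : ℝ), x ^ k * (rexp (-(b * x ^ γ)) * Real.sin (b * Real.tan (π * γ) * x ^ γ))
      = 0 := by
  have hθ : π * γ ∈ Ioo (-(π / 2)) (π / 2) := ⟨by nlinarith [pi_pos], by nlinarith [pi_pos]⟩
  have hs : 0 < ((k : ℝ) + 1) / γ := by positivity
  have hθs : Real.sin (π * γ * (((k : ℝ) + 1) / γ)) = 0 := by
    rw [mul_assoc, mul_div_cancel₀ _ hγ0.ne', mul_comm, ← Nat.cast_succ, Real.sin_nat_mul_pi]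
  have hsub := integral_rpow_mul_comp_rpow_Ioi hγ0 k
    fun y ↦ rexp (-(b * y)) * Real.sin (b * Real.tan (π * γ) * y)
  simp only [rpow_natCast] at hsub
  rw [hsub, integral_rpow_mul_exp_neg_mul_mul_sin_tan_eq_zero hs hb hθ hθs, mul_zero]

theorem power_lindley_perturbation_two_general (α β b γ : ℝ) (hα0 : 0 < α)
    (hb : 0 < b) (hγ1 : α < γ) (hγ2 : γ < 1 / 2)
    (f h₂ : ℝ → ℝ)
    (hf : ∀ x : ℝ, f x = if 0 < x then
      (α * β ^ 2 / (β + 1)) * (1 + x ^ α) * x ^ (α - 1) * Real.exp (-β * x ^ α) else 0)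
    (hh : ∀ x : ℝ, h₂ x = if 0 < x then
      x ^ (1 - α) / (1 + x ^ α) * Real.exp (β * x ^ α - b * x ^ γ) *
        Real.sin (b * x ^ γ * Real.tan (π * γ)) else 0) :
    ∀ k : ℕ, ∫ x in Set.Ioi (0 : ℝ), x ^ k * f x * h₂ x = 0 := by
  intro k
  have hfh : ∀ x ∈ Ioi (0 : ℝ), x ^ k * f x * h₂ x = α * β ^ 2 / (β + 1) *
      (x ^ k * (rexp (-(b * x ^ γ)) * Real.sin (b * Real.tan (π * γ) * x ^ γ))) := by
    intro x (hx : 0 < x)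
    have hpow : x ^ (α - 1) * x ^ (1 - α) = 1 := by rw [← rpow_add hx]; norm_num
    have hexp : rexp (-β * x ^ α) * rexp (β * x ^ α - b * x ^ γ) = rexp (-(b * x ^ γ)) := by
      rw [← Real.exp_add]; ring_nf
    have hlin : 1 + x ^ α ≠ 0 := by positivity
    rw [hf, hh, if_pos hx, if_pos hx, mul_right_comm b]
    calc _ = α * β ^ 2 / (β + 1) * (x ^ k * (rexp (-β * x ^ α) * rexp (β * x ^ α - b * x ^ γ) *
          Real.sin (b * Real.tan (π * γ) * x ^ γ))) * ((1 + x ^ α) / (1 + x ^ α)) *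
          (x ^ (α - 1) * x ^ (1 - α)) := by ring
      _ = _ := by rw [hpow, hexp, div_self hlin, mul_one, mul_one]
  rw [setIntegral_congr_fun measurableSet_Ioi hfh, integral_const_mul,
    integral_pow_mul_exp_neg_mul_rpow_mul_sin_eq_zero hb (hα0.trans hγ1) hγ2, mul_zero]

/-- For `0 < α < 1/2`, `β > 0`, `b > 0` and `γ ∈ (α, 1/2)`, the function
`h₂(x) = (x^{1-α}/(1+x^α)) e^{β x^α - b x^γ} sin(b x^γ tan(πγ))` (for `x > 0`, zero
otherwise) has vanishing moments against the power Lindley density `f`: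
`∫_0^∞ x^k f(x) h₂(x) dx = 0` for every nonnegative integer `k`. -/
theorem power_lindley_perturbation_two (α β b γ : ℝ) (hα0 : 0 < α) (hα : α < 1 / 2)
    (hβ : 0 < β) (hb : 0 < b) (hγ1 : α < γ) (hγ2 : γ < 1 / 2)
    (f h₂ : ℝ → ℝ)
    (hf : ∀ x : ℝ, f x = if 0 < x then
      (α * β ^ 2 / (β + 1)) * (1 + x ^ α) * x ^ (α - 1) * Real.exp (-β * x ^ α) else 0)
    (hh : ∀ x : ℝ, h₂ x = if 0 < x then
      x ^ (1 - α) / (1 + x ^ α) * Real.exp (β * x ^ α - b * x ^ γ) *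
        Real.sin (b * x ^ γ * Real.tan (π * γ)) else 0) :
    ∀ k : ℕ, ∫ x in Set.Ioi (0 : ℝ), x ^ k * f x * h₂ x = 0 :=
  power_lindley_perturbation_two_general α β b γ hα0 hb hγ1 hγ2 f h₂ hf hh
end
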